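/- For λ ∈ (0,1) and s > 0, let φ₂ be defined by φ₂e₁ = λe₁ + (1−λ)e₂ and φ₂e_j = e_j for j ≠ 1, and ψ₂ by ψ₂e₂ = λe₁ + (1−λ)e₂ and ψ₂e_j = e_j for j ≠ 2. Then det φ₂ = λ, det ψ₂ = 1−λ, and with H the hyperplane through 0 with normal (1−λ)e₁ − λe₂: sTⁿ ∩ H⁺ = ψ₂(sTⁿ), sTⁿ ∩ H⁻ = φ₂(sTⁿ), and sTⁿ ∩ H = φ₂(s·conv{0, e₁, e₃, …, eₙ}). -/

import Mathlib

/-!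
`φ₂` and `ψ₂` are the identity with one column (the first, resp. the second) replaced by the
probability vector `v = λe₁ + (1-λ)e₂`. Such a matrix preserves coordinate sums, so it maps
`sTⁿ = {x ≥ 0, ∑ xᵢ ≤ s}` into itself, and since `v` is supported on `{e₁, e₂}` its image of the
orthant is cut out by the single extra inequality `v₁ x₂ ≤ v₂ x₁` (for `ψ₂`), resp.
`v₂ x₁ ≤ v₁ x₂` (for `φ₂`); these are `⟨x, h⟩ ≥ 0` and `⟨x, h⟩ ≤ 0`. Finally `⟨φ₂ y, h⟩ = -λ y₂`,
so `φ₂` maps the facet `{y₂ = 0}` of `sTⁿ`, which is `s • conv{0, e₁, e₃, …, eₙ}`, onto `sTⁿ ∩ H`.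
-/

open scoped RealInnerProductSpace Pointwise

noncomputable section

/-- Euclidean n-space. -/
abbrev E (n : ℕ) := EuclideanSpace ℝ (Fin n)

/-- A (convex) polytope: convex hull of a nonempty finite set. -/
def IsPolytope {n : ℕ} (P : Set (E n)) : Prop :=
  ∃ S : Finset (E n), S.Nonempty ∧ P = convexHull ℝ (S : Set (E n))

/-- Support function. -/
def suppFn {n : ℕ} (P : Set (E n)) (u : E n) : ℝ :=
  sSup ((fun x => ⟪x, u⟫) '' P)

/-- The face of `P` in direction `u`. -/
def face {n : ℕ} (P : Set (E n)) (u : E n) : Set (E n) :=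
  {x ∈ P | ⟪x, u⟫ = suppFn P u}

/-- Dimension of a set: rank of the direction of its affine span. -/
def polyDim {n : ℕ} (P : Set (E n)) : ℕ :=
  Module.finrank ℝ (affineSpan ℝ P).direction

/-- The set of outer unit facet normals of `P`. -/
def normals {n : ℕ} (P : Set (E n)) : Set (E n) :=
  {u | ‖u‖ = 1 ∧ polyDim (face P u) = n - 1}

/-- `a_P(u)`: the (n-1)-dimensional Hausdorff measure of the facet `F(P,u)`. -/
def facetArea {n : ℕ} (P : Set (E n)) (u : E n) : ℝ :=
  (MeasureTheory.Measure.hausdorffMeasure ((n : ℝ) - 1) (face P u)).toReal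

/-- `V(P,u)`: volume of the cone `conv{0, F(P,u)}`. -/
def coneVol {n : ℕ} (P : Set (E n)) (u : E n) : ℝ :=
  (MeasureTheory.volume (convexHull ℝ ({0} ∪ face P u))).toReal

/-- Facet normals whose facet does not contain the origin in its affine hull. -/
def goodNormals {n : ℕ} (P : Set (E n)) : Set (E n) :=
  {u ∈ normals P | (0 : E n) ∉ affineSpan ℝ (face P u)}

/-- The facet vector `fv_ζ`. -/
def fv {n : ℕ} (ζ : ℝ → ℝ) (P : Set (E n)) : E n :=
  ∑ᶠ u ∈ goodNormals P, (ζ (coneVol P u) / suppFn P u) • u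

/-- The linear action of a matrix on Euclidean space. -/
def act {n : ℕ} (M : Matrix (Fin n) (Fin n) ℝ) : E n →ₗ[ℝ] E n :=
  Matrix.toEuclideanLin M

/-- Inverse transpose of a matrix. -/
def invT {n : ℕ} (M : Matrix (Fin n) (Fin n) ℝ) : Matrix (Fin n) (Fin n) ℝ :=
  (M⁻¹).transpose

/-- The `k`-dimensional standard simplex `T^k = conv{0, e₁, …, e_k}` in `ℝⁿ`. -/
def Tk (n k : ℕ) : Set (E n) :=
  convexHull ℝ ({0} ∪ (fun i : Fin n => EuclideanSpace.single i (1 : ℝ)) '' {i | (i : ℕ) < k})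

/-- `hatT n i = conv{0, e₁, e₃, …, e_i}` (0-based indices `{0} ∪ {2,…,i-1}`). -/
def hatT (n i : ℕ) : Set (E n) :=
  convexHull ℝ ({0} ∪ (fun j : Fin n => EuclideanSpace.single j (1 : ℝ)) ''
    {j | (j : ℕ) = 0 ∨ (2 ≤ (j : ℕ) ∧ (j : ℕ) < i)})

/-- The matrix `φ₂`: `e₁ ↦ λe₁ + (1-λ)e₂`, `e_j ↦ e_j` otherwise. -/
def phi2 (n : ℕ) (l : ℝ) : Matrix (Fin n) (Fin n) ℝ :=
  Matrix.of fun i j =>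
    if (j : ℕ) = 0 then (if (i : ℕ) = 0 then l else if (i : ℕ) = 1 then 1 - l else 0)
    else (if i = j then 1 else 0)

/-- The matrix `ψ₂`: `e₂ ↦ λe₁ + (1-λ)e₂`, `e_j ↦ e_j` otherwise. -/
def psi2 (n : ℕ) (l : ℝ) : Matrix (Fin n) (Fin n) ℝ :=
  Matrix.of fun i j =>
    if (j : ℕ) = 1 then (if (i : ℕ) = 0 then l else if (i : ℕ) = 1 then 1 - l else 0)
    else (if i = j then 1 else 0)

/-- The normal vector `(1-λ)e₁ - λe₂` of the hyperplane `H`. -/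
def hNormal (n : ℕ) (l : ℝ) : E n :=
  WithLp.toLp 2 (fun j : Fin n => if (j : ℕ) = 0 then 1 - l else if (j : ℕ) = 1 then -l else 0)

lemma convexHull_zero_union_single {n : ℕ} (S : Set (Fin n)) :
    convexHull ℝ ({0} ∪ (fun i : Fin n => EuclideanSpace.single i (1 : ℝ)) '' S)
      = {x : E n | (∀ i, 0 ≤ x i) ∧ ∑ i, x i ≤ 1 ∧ ∀ i ∉ S, x i = 0} := by
  classical
  apply Set.Subset.antisymm
  · refine convexHull_min ?_ ?_
    · rintro _ (rfl | ⟨i, hi, rfl⟩)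
      · simp
      · refine ⟨fun k => ?_, by simp, fun k hk => ?_⟩
        · simp only [PiLp.single_apply]
          split_ifs <;> norm_num
        · simp [show k ≠ i from fun h => hk (h ▸ hi)]
    · rintro a ⟨ha0, ha1, haS⟩ b ⟨hb0, hb1, hbS⟩ p q hp hq hpq
      simp only [Set.mem_ofPred_eq, PiLp.add_apply, PiLp.smul_apply, smul_eq_mul,
        Finset.sum_add_distrib, ← Finset.mul_sum]
      refine ⟨fun i => by nlinarith [ha0 i, hb0 i], by nlinarith, fun i hi => ?_⟩
      simp [haS i hi, hbS i hi]
  · rintro x ⟨hx0, hx1, hxS⟩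
    let z : Option (Fin n) → E n := fun o =>
      o.elim 0 fun i => if i ∈ S then EuclideanSpace.single i 1 else 0
    let w : Option (Fin n) → ℝ := fun o => o.elim (1 - ∑ i, x i) x
    have hxz : x = ∑ o, w o • z o := by
      have hterm : ∀ i, x i • z (some i) = x i • EuclideanSpace.single i 1 := fun i => by
        by_cases hi : i ∈ S
        · simp [z, hi]
        · simp [hxS i hi]
      simp only [Fintype.sum_option, w, Option.elim, hterm]
      simpa [z] using ((EuclideanSpace.basisFun (Fin n) ℝ).sum_repr x).symm
    rw [hxz]
    refine (convex_convexHull ℝ _).sum_mem (fun o _ => ?_) ?_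
      (fun o _ => subset_convexHull ℝ _ ?_)
    · cases o with
      | none => simpa [w] using hx1
      | some i => exact hx0 i
    · simp [Fintype.sum_option, w]
    · cases o with
      | none => exact Or.inl rfl
      | some i =>
        by_cases hi : i ∈ S
        · exact Or.inr ⟨i, hi, by simp [z, hi]⟩
        · simp [z, hi]

lemma smul_convexHull_zero_union_single {n : ℕ} (S : Set (Fin n)) {s : ℝ} (hs : 0 < s) :
    s • convexHull ℝ ({0} ∪ (fun i : Fin n => EuclideanSpace.single i (1 : ℝ)) '' S)
      = {x : E n | (∀ i, 0 ≤ x i) ∧ ∑ i, x i ≤ s ∧ ∀ i ∉ S, x i = 0} := by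
  ext x
  simp only [convexHull_zero_union_single, Set.mem_smul_set_iff_inv_smul_mem₀ hs.ne',
    Set.mem_ofPred_eq, PiLp.smul_apply, smul_eq_mul, ← Finset.mul_sum, inv_mul_le_iff₀ hs,
    mul_one, mul_eq_zero, inv_eq_zero, hs.ne', false_or, inv_pos.2 hs, mul_nonneg_iff_of_pos_left]

section ReplaceColumn

variable {n : ℕ}

lemma act_one_updateCol_apply (j : Fin n) (c : Fin n → ℝ) (y : E n) (i : Fin n) :
    act ((1 : Matrix (Fin n) (Fin n) ℝ).updateCol j c) y i
      = Function.update (⇑y) j 0 i + c i * y j := by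
  simp only [act, Matrix.toEuclideanLin, Matrix.toLpLin_apply, Matrix.mulVec, dotProduct,
    Matrix.updateCol_apply, Matrix.one_apply, ite_mul, one_mul, zero_mul]
  rw [Fintype.sum_eq_add_sum_compl j, if_pos rfl, Finset.sum_ite_of_false (by simp)]
  by_cases hij : i = j
  · subst hij
    simp
  · simp [hij]
    ring

lemma det_one_updateCol (j : Fin n) (c : Fin n → ℝ) :
    ((1 : Matrix (Fin n) (Fin n) ℝ).updateCol j c).det = c j := by
  simpa [Matrix.one_apply] using Matrix.det_updateCol_sum (1 : Matrix (Fin n) (Fin n) ℝ) j c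

lemma sum_act_one_updateCol {j : Fin n} {c : Fin n → ℝ} (hc : ∑ k, c k = 1) (y : E n) :
    ∑ i, act ((1 : Matrix (Fin n) (Fin n) ℝ).updateCol j c) y i = ∑ i, y i := by
  simp only [act_one_updateCol_apply, Finset.sum_add_distrib, ← Finset.sum_mul, hc, one_mul,
    Finset.sum_update_of_mem (Finset.mem_univ j), zero_add]
  rw [← Finset.sum_erase_add _ _ (Finset.mem_univ j), Finset.sdiff_singleton_eq_erase]

lemma image_act_one_updateCol_orthant {j : Fin n} {c : Fin n → ℝ} (hcj : 0 < c j) :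
    act ((1 : Matrix (Fin n) (Fin n) ℝ).updateCol j c) '' {y | ∀ i, 0 ≤ y i}
      = {x | 0 ≤ x j ∧ ∀ k, c k * x j ≤ c j * x k} := by
  ext x
  constructor
  · rintro ⟨y, hy, rfl⟩
    simp only [Set.mem_ofPred_eq, act_one_updateCol_apply, Function.update_self, zero_add]
    refine ⟨mul_nonneg hcj.le (hy j), fun k => ?_⟩
    rcases eq_or_ne k j with rfl | hkj
    · simp
    · rw [Function.update_of_ne hkj]
      nlinarith [hy k]
  · rintro ⟨hxj, hx⟩
    refine ⟨WithLp.toLp 2 (Function.update (fun k => x k - c k * x j / c j) j (x j / c j)),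
      fun k => ?_, PiLp.ext fun k => ?_⟩
    · rcases eq_or_ne k j with rfl | hkj
      · simpa using div_nonneg hxj hcj.le
      · simpa [Function.update_of_ne hkj, sub_nonneg, div_le_iff₀ hcj, mul_comm] using hx k
    · rcases eq_or_ne k j with rfl | hkj
      · simp [act_one_updateCol_apply]
        field_simp
      · simp [act_one_updateCol_apply, Function.update_of_ne hkj]
        field_simp
        ring

lemma image_act_one_updateCol_simplex {j j' : Fin n} {c : Fin n → ℝ} (hc0 : ∀ k, 0 ≤ c k)
    (hc1 : ∑ k, c k = 1) (hcj : 0 < c j) (hsupp : ∀ k, k ≠ j → k ≠ j' → c k = 0) (s : ℝ) :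
    act ((1 : Matrix (Fin n) (Fin n) ℝ).updateCol j c) '' {y | (∀ i, 0 ≤ y i) ∧ ∑ i, y i ≤ s}
      = {x | (∀ i, 0 ≤ x i) ∧ ∑ i, x i ≤ s} ∩ {x | c j' * x j ≤ c j * x j'} := by
  set A := act ((1 : Matrix (Fin n) (Fin n) ℝ).updateCol j c)
  have hA : {y : E n | (∀ i, 0 ≤ y i) ∧ ∑ i, y i ≤ s}
      = {y | ∀ i, 0 ≤ y i} ∩ A ⁻¹' {x | ∑ i, x i ≤ s} := by
    ext y
    simp [A, sum_act_one_updateCol hc1]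
  conv_lhs => rw [hA, Set.image_inter_preimage, image_act_one_updateCol_orthant hcj]
  ext x
  simp only [Set.mem_inter_iff, Set.mem_ofPred_eq]
  constructor
  · rintro ⟨⟨hxj, hx⟩, hsum⟩
    refine ⟨⟨fun k => ?_, hsum⟩, hx j'⟩
    rcases eq_or_ne k j with rfl | hkj
    · exact hxj
    · exact nonneg_of_mul_nonneg_right (le_trans (mul_nonneg (hc0 k) hxj) (hx k)) hcj
  · rintro ⟨⟨hx, hsum⟩, hj'⟩
    refine ⟨⟨hx j, fun k => ?_⟩, hsum⟩
    by_cases hkj : k = j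
    · rw [hkj]
    by_cases hkj' : k = j'
    · rwa [hkj']
    rw [hsupp k hkj hkj', zero_mul]
    exact mul_nonneg hcj.le (hx k)

end ReplaceColumn

lemma smul_Tk_self {n : ℕ} {s : ℝ} (hs : 0 < s) :
    s • Tk n n = {x : E n | (∀ i, 0 ≤ x i) ∧ ∑ i, x i ≤ s} := by
  rw [Tk, smul_convexHull_zero_union_single _ hs]
  simp

lemma smul_hatT_self {m : ℕ} {s : ℝ} (hs : 0 < s) :
    s • hatT (m + 2) (m + 2)
      = {x : E (m + 2) | (∀ i, 0 ≤ x i) ∧ ∑ i, x i ≤ s} ∩ {x | x 1 = 0} := by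
  have hS : ∀ i : Fin (m + 2),
      ¬((i : ℕ) = 0 ∨ 2 ≤ (i : ℕ) ∧ (i : ℕ) < m + 2) ↔ i = 1 := by
    intro i
    simp only [Fin.ext_iff, Fin.val_one]
    omega
  ext x
  rw [hatT, smul_convexHull_zero_union_single _ hs]
  simp only [Set.mem_inter_iff, Set.mem_ofPred_eq, hS, forall_eq, and_assoc]

/-- The column `λe₁ + (1-λ)e₂` shared by `φ₂` and `ψ₂`. -/
def mixCol (n : ℕ) (l : ℝ) : Fin n → ℝ :=
  fun i => if (i : ℕ) = 0 then l else if (i : ℕ) = 1 then 1 - l else 0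

lemma phi2_eq_updateCol (m : ℕ) (l : ℝ) :
    phi2 (m + 2) l
      = (1 : Matrix (Fin (m + 2)) (Fin (m + 2)) ℝ).updateCol 0 (mixCol (m + 2) l) := by
  ext i k
  rw [Matrix.updateCol_apply, Matrix.one_apply, phi2, Matrix.of_apply, mixCol]
  rcases eq_or_ne k 0 with rfl | hk
  · simp
  · simp [hk, Fin.val_eq_zero_iff]

lemma psi2_eq_updateCol (m : ℕ) (l : ℝ) :
    psi2 (m + 2) l
      = (1 : Matrix (Fin (m + 2)) (Fin (m + 2)) ℝ).updateCol 1 (mixCol (m + 2) l) := by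
  ext i k
  rw [Matrix.updateCol_apply, Matrix.one_apply, psi2, Matrix.of_apply, mixCol]
  rcases eq_or_ne k 1 with rfl | hk
  · simp
  · have hk' : (k : ℕ) ≠ 1 := by simpa [Fin.ext_iff] using hk
    simp [hk, hk']

lemma sum_mixCol (m : ℕ) (l : ℝ) : ∑ i, mixCol (m + 2) l i = 1 := by
  simp [mixCol, Fin.sum_univ_succ, Fin.succ_ne_zero]

lemma inner_hNormal (m : ℕ) (l : ℝ) (x : E (m + 2)) :
    ⟪x, hNormal (m + 2) l⟫ = (1 - l) * x 0 - l * x 1 := by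
  simp [PiLp.inner_apply, hNormal, Fin.sum_univ_succ]
  ring

lemma inner_act_phi2_hNormal (m : ℕ) (l : ℝ) (y : E (m + 2)) :
    ⟪act (phi2 (m + 2) l) y, hNormal (m + 2) l⟫ = -l * y 1 := by
  simp [inner_hNormal, phi2_eq_updateCol, act_one_updateCol_apply, mixCol]
  ring

lemma mixCol_nonneg {n : ℕ} {l : ℝ} (hl0 : 0 ≤ l) (hl1 : l ≤ 1) (k : Fin n) :
    0 ≤ mixCol n l k := by
  unfold mixCol
  split_ifs <;> linarith

lemma mixCol_eq_zero {m : ℕ} (l : ℝ) {k : Fin (m + 2)} (h0 : k ≠ 0) (h1 : k ≠ 1) :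
    mixCol (m + 2) l k = 0 := by
  have h1' : (k : ℕ) ≠ 1 := fun h => h1 (Fin.ext (by simpa using h))
  simp [mixCol, Fin.val_eq_zero_iff, h0, h1']

lemma image_psi2_simplex {m : ℕ} {l : ℝ} (hl0 : 0 < l) (hl1 : l < 1) (s : ℝ) :
    act (psi2 (m + 2) l) '' {y | (∀ i, 0 ≤ y i) ∧ ∑ i, y i ≤ s}
      = {x | (∀ i, 0 ≤ x i) ∧ ∑ i, x i ≤ s} ∩ {x | 0 ≤ ⟪x, hNormal (m + 2) l⟫} := by
  rw [psi2_eq_updateCol, image_act_one_updateCol_simplex (j' := 0)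
    (mixCol_nonneg hl0.le hl1.le) (sum_mixCol m l) (by simp [mixCol, hl1])
    (fun k h1 h0 => mixCol_eq_zero l h0 h1)]
  ext x
  simp [inner_hNormal, mixCol]

lemma image_phi2_simplex {m : ℕ} {l : ℝ} (hl0 : 0 < l) (hl1 : l < 1) (s : ℝ) :
    act (phi2 (m + 2) l) '' {y | (∀ i, 0 ≤ y i) ∧ ∑ i, y i ≤ s}
      = {x | (∀ i, 0 ≤ x i) ∧ ∑ i, x i ≤ s} ∩ {x | ⟪x, hNormal (m + 2) l⟫ ≤ 0} := by
  rw [phi2_eq_updateCol, image_act_one_updateCol_simplex (j' := 1)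
    (mixCol_nonneg hl0.le hl1.le) (sum_mixCol m l) (by simp [mixCol, hl0])
    (fun k h0 h1 => mixCol_eq_zero l h0 h1)]
  ext x
  simp [inner_hNormal, mixCol]

/-- determinants of `φ₂, ψ₂` and the triangulation of `sTⁿ` by the
hyperplane `H` with normal `(1-λ)e₁ - λe₂`. -/
theorem triangulation_sTn {n : ℕ} (hn : 2 ≤ n) (l : ℝ) (hl0 : 0 < l) (hl1 : l < 1)
    (s : ℝ) (hs : 0 < s) :
    (phi2 n l).det = l ∧ (psi2 n l).det = 1 - l
    ∧ (s • Tk n n) ∩ {x : E n | 0 ≤ ⟪x, hNormal n l⟫} = act (psi2 n l) '' (s • Tk n n)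
    ∧ (s • Tk n n) ∩ {x : E n | ⟪x, hNormal n l⟫ ≤ 0} = act (phi2 n l) '' (s • Tk n n)
    ∧ (s • Tk n n) ∩ {x : E n | ⟪x, hNormal n l⟫ = 0} = act (phi2 n l) '' (s • hatT n n) := by
  obtain ⟨m, rfl⟩ : ∃ m, n = m + 2 := ⟨n - 2, by omega⟩
  have hminus := image_phi2_simplex (m := m) hl0 hl1 s
  refine ⟨by simp [phi2_eq_updateCol, det_one_updateCol, mixCol],
    by simp [psi2_eq_updateCol, det_one_updateCol, mixCol],
    by rw [smul_Tk_self hs, image_psi2_simplex hl0 hl1], by rw [smul_Tk_self hs, hminus], ?_⟩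
  have hker : act (phi2 (m + 2) l) ⁻¹' {x | ⟪x, hNormal (m + 2) l⟫ = 0} = {y | y 1 = 0} := by
    ext y
    simp [inner_act_phi2_hNormal, hl0.ne']
  calc (s • Tk (m + 2) (m + 2)) ∩ {x | ⟪x, hNormal (m + 2) l⟫ = 0}
      = (s • Tk (m + 2) (m + 2)) ∩ {x | ⟪x, hNormal (m + 2) l⟫ ≤ 0}
          ∩ {x | ⟪x, hNormal (m + 2) l⟫ = 0} := by
        rw [Set.inter_assoc]
        exact congrArg _ (Set.inter_eq_right.mpr fun x hx => le_of_eq hx).symm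
    _ = act (phi2 (m + 2) l) '' (s • hatT (m + 2) (m + 2)) := by
        rw [smul_Tk_self hs, ← hminus, ← Set.image_inter_preimage, hker, smul_hatT_self hs]
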